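/- Let n ≥ 1, τ > 0, A, B, H(λ,K), L, and the closed-loop system be as in the context. If r(K) := max_{i=2,…,N} ρ(H(λ_i,K)) < 1, then for every initial state x(0), the consensus error e(k) := x(k) − (1/N)(𝟙_N 𝟙_N^T ⊗ A^k) x(0) converges to zero as k → ∞; in particular each agent's state x_i(k) satisfies x_i(k) − (1/N) A^k Σ_{p=1}^{N} x_p(0) → 0. -/

import Mathlib

open Matrix Kronecker Filter

/-- The n×n system matrix `A`: ones on the diagonal, `τ` on the superdiagonal. -/
noncomputable def Amat (n : ℕ) (τ : ℝ) : Matrix (Fin n) (Fin n) ℝ :=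
  Matrix.of fun i j => if (j : ℕ) = (i : ℕ) then 1 else if (j : ℕ) = (i : ℕ) + 1 then τ else 0

/-- The n×1 input matrix `B`: last entry `τ`, all other entries `0`. -/
noncomputable def Bmat (n : ℕ) (τ : ℝ) : Matrix (Fin n) (Fin 1) ℝ :=
  Matrix.of fun i _ => if (i : ℕ) = n - 1 then τ else 0

/-- `H(λ, K) = A - λ B K`. -/
noncomputable def Hmat (n : ℕ) (τ : ℝ) (lam : ℝ) (K : Matrix (Fin 1) (Fin n) ℝ) :
    Matrix (Fin n) (Fin n) ℝ :=
  Amat n τ - lam • (Bmat n τ * K)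

/-- Spectral radius of a real matrix: the largest modulus of its complex eigenvalues. -/
noncomputable def specRad {n : ℕ} (M : Matrix (Fin n) (Fin n) ℝ) : ℝ :=
  sSup ((fun z : ℂ => ‖z‖) '' spectrum ℂ (M.map (Complex.ofReal ·)))

/-!
Write `L = V diag(λ) Vᵀ` with `V` orthogonal and let `P_p = v_p v_pᵀ` be the projections onto its
columns. They are orthogonal idempotents summing to `1`, so the closed-loop matrix is
`∑ P_p ⊗ H(λ_p, K)` and its `k`-th power is `∑ P_p ⊗ H(λ_p, K)^k`. Since `L𝟙 = 0` and all other
`λ_p` are nonzero, the column `v_1` is `±𝟙/√N`, so the `p = 1` term is exactly `(1/N) 𝟙𝟙ᵀ ⊗ A^k`.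
Every remaining term tends to zero because `ρ(H(λ_p, K)) < 1`, by Gelfand's formula.
-/

open Topology

lemma tendsto_pow_atTop_nhds_zero_of_spectralRadius_lt_one {A : Type*} [NormedRing A]
    [NormedAlgebra ℂ A] [CompleteSpace A] {a : A} (ha : spectralRadius ℂ a < 1) :
    Tendsto (fun k : ℕ => a ^ k) atTop (𝓝 0) := by
  obtain ⟨r, har, hr1⟩ := ENNReal.lt_iff_exists_nnreal_btwn.mp ha
  have hpow : ∀ᶠ k : ℕ in atTop, ‖a ^ k‖ ≤ (r : ℝ) ^ k := by
    filter_upwards [(spectrum.pow_nnnorm_pow_one_div_tendsto_nhds_spectralRadius a)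
      |>.eventually_lt_const har, eventually_ge_atTop 1] with k hk hk1
    rw [one_div, ENNReal.rpow_inv_lt_iff (by positivity), ENNReal.rpow_natCast] at hk
    exact_mod_cast hk.le
  rw [tendsto_zero_iff_norm_tendsto_zero]
  exact squeeze_zero' (.of_forall fun _ => norm_nonneg _) hpow
    (tendsto_pow_atTop_nhds_zero_of_lt_one r.coe_nonneg (by exact_mod_cast hr1))

section LinftyOpNorm

attribute [local instance] Matrix.linftyOpNormedRing Matrix.linftyOpNormedAlgebra

lemma spectralRadius_map_ofReal_lt_one {n : ℕ} {M : Matrix (Fin n) (Fin n) ℝ}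
    (h : specRad M < 1) : spectralRadius ℂ (M.map (Complex.ofReal ·)) < 1 := by
  have hbdd := ((spectrum.isCompact (M.map (Complex.ofReal ·))).image
    (continuous_norm (E := ℂ))).bddAbove
  calc spectralRadius ℂ (M.map (Complex.ofReal ·)) ≤ ENNReal.ofReal (specRad M) :=
        iSup₂_le fun μ hμ => by
          rw [← ENNReal.ofReal_coe_nnreal, coe_nnnorm]
          exact ENNReal.ofReal_le_ofReal (le_csSup hbdd ⟨μ, hμ, rfl⟩)
    _ < 1 := ENNReal.ofReal_lt_one.mpr h

lemma tendsto_map_ofReal_pow_of_specRad_lt_one {n : ℕ} {M : Matrix (Fin n) (Fin n) ℝ}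
    (h : specRad M < 1) :
    Tendsto (fun k : ℕ => (M.map (Complex.ofReal ·)) ^ k) atTop (𝓝 0) :=
  tendsto_pow_atTop_nhds_zero_of_spectralRadius_lt_one (spectralRadius_map_ofReal_lt_one h)

end LinftyOpNorm

lemma tendsto_pow_atTop_nhds_zero_of_specRad_lt_one {n : ℕ} {M : Matrix (Fin n) (Fin n) ℝ}
    (h : specRad M < 1) : Tendsto (fun k : ℕ => M ^ k) atTop (𝓝 0) := by
  have hre := ((continuous_id.matrix_map Complex.continuous_re).tendsto 0).comp
    (tendsto_map_ofReal_pow_of_specRad_lt_one h)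
  convert hre using 2 with k
  · change M ^ k = ((Complex.ofRealHom.mapMatrix M) ^ k).map Complex.re
    rw [← map_pow]
    ext; simp
  · simp

namespace Matrix

lemma sum_kronecker {κ l m n p R : Type*} [Fintype κ] [CommRing R] (A : κ → Matrix l m R)
    (B : Matrix n p R) : (∑ q, A q) ⊗ₖ B = ∑ q, A q ⊗ₖ B := by
  ext; simp [Matrix.sum_apply, Finset.sum_mul]

lemma continuous_kronecker_left {l m n p R : Type*} [TopologicalSpace R] [Mul R] [ContinuousMul R]
    (P : Matrix l m R) : Continuous fun X : Matrix n p R => P ⊗ₖ X :=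
  continuous_matrix fun _ _ => continuous_const.mul (continuous_id.matrix_elem _ _)

lemma smul_ones_kronecker_mulVec_apply {ι n R : Type*} [Fintype ι] [Fintype n] [CommSemiring R]
    (c : R) (B : Matrix n n R) (x : ι × n → R) (i : ι) (l : n) :
    ((c • ((of fun _ _ => (1 : R)) ⊗ₖ B)) *ᵥ x) (i, l) = c * (B *ᵥ fun m => ∑ p, x (p, m)) l := by
  simp [mulVec, dotProduct, Fintype.sum_prod_type, Finset.mul_sum]
  rw [Finset.sum_comm]
  simp only [mul_assoc]

lemma sum_kronecker_pow {ι κ m R : Type*} [Fintype ι] [DecidableEq ι] [Fintype κ] [DecidableEq κ]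
    [Fintype m] [DecidableEq m] [CommRing R] (P : κ → Matrix ι ι R)
    (hP : ∀ p q, P p * P q = if p = q then P p else 0) (hP1 : ∑ p, P p = 1)
    (X : κ → Matrix m m R) (k : ℕ) :
    (∑ p, P p ⊗ₖ X p) ^ k = ∑ p, P p ⊗ₖ (X p ^ k) := by
  induction k with
  | zero => simp only [pow_zero]; rw [← sum_kronecker, hP1, one_kronecker_one]
  | succ k ih =>
    simp_rw [pow_succ, ih, Finset.sum_mul_sum, ← mul_kronecker_mul, hP]
    refine Finset.sum_congr rfl fun p _ => ?_
    rw [Finset.sum_eq_single p (fun q _ hq => by simp [Ne.symm hq]) (by simp), if_pos rfl]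

section CommRing

variable {ι R : Type*} [Fintype ι] [DecidableEq ι] [CommRing R]

def colProj (V : Matrix ι ι R) (p : ι) : Matrix ι ι R := vecMulVec (Vᵀ p) (Vᵀ p)

variable {V : Matrix ι ι R}

lemma sum_smul_colProj (d : ι → R) : ∑ p, d p • colProj V p = V * diagonal d * Vᵀ := by
  ext i j
  simp [colProj, Matrix.sum_apply, mul_apply, vecMulVec_apply, diagonal_apply]
  exact Finset.sum_congr rfl fun _ _ => by ring

lemma sum_colProj (hV : V * Vᵀ = 1) : ∑ p, colProj V p = 1 := by
  simpa [hV] using sum_smul_colProj (V := V) 1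

lemma colProj_mul_colProj (hV : Vᵀ * V = 1) (p q : ι) :
    colProj V p * colProj V q = if p = q then colProj V p else 0 := by
  have : Vᵀ p ⬝ᵥ Vᵀ q = (1 : Matrix ι ι R) p q := by rw [← hV]; rfl
  rw [colProj, colProj, vecMulVec_mul_vecMulVec, this, one_apply]
  split_ifs with h <;> simp [h]

lemma one_kronecker_sub_kronecker_eq_sum_colProj {m : Type*} (hV : V * Vᵀ = 1) (d : ι → R)
    (A C : Matrix m m R) :
    (1 : Matrix ι ι R) ⊗ₖ A - (V * diagonal d * Vᵀ) ⊗ₖ C = ∑ p, colProj V p ⊗ₖ (A - d p • C) := by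
  rw [← sum_smul_colProj, ← sum_colProj hV]
  ext
  simp [Matrix.sum_apply, Finset.sum_mul, ← Finset.sum_sub_distrib]
  exact Finset.sum_congr rfl fun _ _ => by ring

end CommRing

lemma colProj_eq_of_mulVec_one_eq_zero {ι K : Type*} [Fintype ι] [DecidableEq ι] [Field K]
    {V : Matrix ι ι K} (hV : Vᵀ * V = 1) {d : ι → K} {z : ι}
    (hd : ∀ p, p ≠ z → d p ≠ 0) (h1 : (V * diagonal d * Vᵀ) *ᵥ (fun _ => 1) = 0) :
    colProj V z = (Fintype.card ι : K)⁻¹ • of fun _ _ => 1 := by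
  have hV' : V * Vᵀ = 1 := mul_eq_one_comm.mp hV
  set w : ι → K := Vᵀ *ᵥ fun _ => 1
  have hw : ∀ p, p ≠ z → w p = 0 := by
    intro p hp
    have hDw : diagonal d *ᵥ w = 0 := by
      simpa [mulVec_mulVec, ← Matrix.mul_assoc, hV, w] using congrArg (Vᵀ *ᵥ ·) h1
    simpa [mulVec_diagonal, hd p hp] using congrFun hDw p
  have hVw : ∀ i, V i z * w z = 1 := by
    intro i
    have : (V *ᵥ w) i = 1 := by simp [w, mulVec_mulVec, hV']
    rwa [mulVec, dotProduct, Finset.sum_eq_single z (fun p _ hp => by simp [hw p hp])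
      (by simp)] at this
  have hww : w z * w z = Fintype.card ι := by
    calc w z * w z = ∑ i, V i z * w z := by simp [w, mulVec, dotProduct, Finset.sum_mul]
      _ = Fintype.card ι := by simp [hVw]
  ext i j
  have hwz : w z ≠ 0 := by intro h; simpa [h] using hVw i
  simp only [colProj, vecMulVec_apply, transpose_apply, smul_apply, of_apply, smul_eq_mul,
    mul_one, ← hww]
  field_simp
  linear_combination (V j z * w z) * hVw i + hVw j

end Matrix

open Matrix in
/-- if `r(K) = max_{i ≥ 2} ρ(H(λ_i,K)) < 1`, then for every initial state the
consensus error `e(k) = x(k) − (1/N)(𝟙𝟙ᵀ ⊗ A^k) x(0)` converges to zero; in particular every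
agent's state satisfies `x_i(k) − (1/N) A^k ∑_p x_p(0) → 0`. -/
theorem stmt_4 (n : ℕ) (τ : ℝ)
    (N : ℕ) (hN : 2 ≤ N) (L : Matrix (Fin N) (Fin N) ℝ)
    (lam : Fin N → ℝ) (hlam0 : lam ⟨0, by omega⟩ = 0)
    (hlampos : ∀ i : Fin N, i ≠ ⟨0, by omega⟩ → 0 < lam i)
    (hL1 : L *ᵥ (fun _ => (1 : ℝ)) = 0)
    (hdiag : ∃ V : Matrix (Fin N) (Fin N) ℝ, Vᵀ * V = 1 ∧ L = V * Matrix.diagonal lam * Vᵀ)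
    (K : Matrix (Fin 1) (Fin n) ℝ)
    (hr : ∀ i : Fin N, i ≠ ⟨0, by omega⟩ → specRad (Hmat n τ (lam i) K) < 1) :
    ∀ x0 : Fin N × Fin n → ℝ,
      Tendsto (fun k : ℕ =>
          (((1 : Matrix (Fin N) (Fin N) ℝ) ⊗ₖ Amat n τ - L ⊗ₖ (Bmat n τ * K)) ^ k) *ᵥ x0
          - ((N : ℝ)⁻¹ • ((Matrix.of fun _ _ => (1 : ℝ)) ⊗ₖ (Amat n τ ^ k))) *ᵥ x0)
        atTop (nhds 0)
      ∧ ∀ i : Fin N, ∀ l : Fin n,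
          Tendsto (fun k : ℕ =>
              ((((1 : Matrix (Fin N) (Fin N) ℝ) ⊗ₖ Amat n τ - L ⊗ₖ (Bmat n τ * K)) ^ k) *ᵥ x0) (i, l)
              - (N : ℝ)⁻¹ * ((Amat n τ ^ k) *ᵥ (fun m => ∑ p : Fin N, x0 (p, m))) l)
            atTop (nhds 0) := by
  intro x0
  obtain ⟨V, hV, rfl⟩ := hdiag
  have hV' : V * Vᵀ = 1 := mul_eq_one_comm.mp hV
  set z : Fin N := ⟨0, by omega⟩
  have hM : (1 : Matrix (Fin N) (Fin N) ℝ) ⊗ₖ Amat n τ - (V * diagonal lam * Vᵀ) ⊗ₖ (Bmat n τ * K)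
      = ∑ p, colProj V p ⊗ₖ Hmat n τ (lam p) K :=
    one_kronecker_sub_kronecker_eq_sum_colProj hV' lam _ _
  have hPz : colProj V z = (N : ℝ)⁻¹ • of fun _ _ => 1 := by
    simpa using colProj_eq_of_mulVec_one_eq_zero hV (fun p hp => (hlampos p hp).ne') hL1
  have hHz : Hmat n τ (lam z) K = Amat n τ := by simp [Hmat, hlam0]
  have herr : ∀ k : ℕ, (∑ p, colProj V p ⊗ₖ Hmat n τ (lam p) K) ^ k
      - (N : ℝ)⁻¹ • (of (fun _ _ => (1 : ℝ)) ⊗ₖ (Amat n τ ^ k))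
      = ∑ p ∈ Finset.univ.erase z, colProj V p ⊗ₖ (Hmat n τ (lam p) K ^ k) := fun k => by
    rw [sum_kronecker_pow _ (colProj_mul_colProj hV) (sum_colProj hV'),
      ← Finset.add_sum_erase _ _ (Finset.mem_univ z), hPz, hHz, smul_kronecker,
      add_sub_cancel_left]
  have hterm : ∀ p ∈ Finset.univ.erase z,
      Tendsto (fun k : ℕ => colProj V p ⊗ₖ (Hmat n τ (lam p) K ^ k)) atTop (𝓝 0) := by
    intro p hp
    rw [← kronecker_zero (colProj V p)]
    exact ((continuous_kronecker_left _).tendsto 0).comp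
      (tendsto_pow_atTop_nhds_zero_of_specRad_lt_one (hr p (Finset.ne_of_mem_erase hp)))
  have hvec := ((continuous_id.matrix_mulVec (continuous_const (y := x0))).tendsto 0).comp
    (by simpa only [Finset.sum_const_zero] using tendsto_finsetSum _ hterm)
  simp only [Function.comp_def, id, zero_mulVec, ← herr, ← hM, sub_mulVec] at hvec
  refine ⟨hvec, fun i l => ?_⟩
  simpa [smul_ones_kronecker_mulVec_apply] using tendsto_pi_nhds.1 hvec (i, l)
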